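/- Conversely, any pure state |φ⟩ on ℂ^d ⊗ ℂ^d satisfying T(|φ⟩⟨φ|) = ρ_λ = Σ_l λ_l |Ψ_{0l}⟩⟨Ψ_{0l}| must be of the form |φ⟩ = Σ_l c_l |Ψ_{0l}⟩ with |c_l|² = λ_l for all l. -/

import Mathlib

open scoped BigOperators Classical ComplexOrder

/-- The primitive `d`-th root of unity `η = e^{2πi/d}`. -/
noncomputable def eta (d : ℕ) : ℂ := Complex.exp (2 * (Real.pi : ℂ) * Complex.I / d)

/-- The unitaries `U_{kl} = Σ_r η^{rl} |k+r⟩⟨r|` (index addition mod `d`). -/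
noncomputable def Umat (d : ℕ) [NeZero d] (k l : Fin d) : Matrix (Fin d) (Fin d) ℂ :=
  fun i r => if i = k + r then eta d ^ ((r : ℕ) * (l : ℕ)) else 0

/-- The maximally entangled vectors `Ψ_{kl} = (1/√d) Σ_j |j⟩ ⊗ U_{kl}|j⟩`,
as functions on `Fin d × Fin d` (component at `(a,b)` is `(1/√d)·(U_{kl})_{b a}`). -/
noncomputable def Psi (d : ℕ) [NeZero d] (k l : Fin d) : Fin d × Fin d → ℂ :=
  fun p => (1 / (Real.sqrt d : ℂ)) * Umat d k l p.2 p.1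

/-- Rank-one projector `|v⟩⟨v|`. -/
noncomputable def outer {ι : Type*} (v : ι → ℂ) : Matrix ι ι ℂ :=
  fun i j => v i * (starRingEnd ℂ) (v j)

/-- The symmetry group element `U_{k,l} ⊗ U_{k,-l}` on `ℂ^d ⊗ ℂ^d`. -/
noncomputable def Gmat (d : ℕ) [NeZero d] (k l : Fin d) :
    Matrix (Fin d × Fin d) (Fin d × Fin d) ℂ :=
  fun p q => Umat d k l p.1 q.1 * Umat d k (-l) p.2 q.2

/-- The twirl `T(ρ) = d⁻² Σ_{g∈G} g* ρ g`. -/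
noncomputable def twirl (d : ℕ) [NeZero d]
    (ρ : Matrix (Fin d × Fin d) (Fin d × Fin d) ℂ) :
    Matrix (Fin d × Fin d) (Fin d × Fin d) ℂ :=
  (((d : ℂ)) ^ 2)⁻¹ • ∑ k, ∑ l, (Gmat d k l).conjTranspose * ρ * Gmat d k l

/-- Expectation value `⟨v|ρ|v⟩`. -/
noncomputable def expec {ι : Type*} [Fintype ι] (v : ι → ℂ)
    (ρ : Matrix ι ι ℂ) : ℂ :=
  ∑ p, ∑ q, (starRingEnd ℂ) (v p) * ρ p q * v q

/-- The state `ρ_λ = Σ_l λ_l |Ψ_{0l}⟩⟨Ψ_{0l}|`. -/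
noncomputable def rhoLam (d : ℕ) [NeZero d] (lam : Fin d → ℝ) :
    Matrix (Fin d × Fin d) (Fin d × Fin d) ℂ :=
  ∑ l, ((lam l : ℝ) : ℂ) • outer (Psi d 0 l)

/-!
Each `Ψ_{kl}` is an eigenvector of every `U_{k',l'} ⊗ U_{k',-l'}`, with a root of unity as
eigenvalue, so conjugating by a group element, and hence twirling, leaves every expectation value
`⟨Ψ_{kl}|ρ|Ψ_{kl}⟩` unchanged. For `ρ = |φ⟩⟨φ|` these are `|⟨Ψ_{kl}|φ⟩|²`, while for `ρ_λ` they
are `λ_l` if `k = 0` and `0` otherwise. Expanding `φ` in the orthonormal basis `{Ψ_{kl}}` gives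
the claim with `c_l = ⟨Ψ_{0l}|φ⟩`.
-/

open Matrix WithLp

section RootOfUnity

variable (d : ℕ) [NeZero d]

lemma isPrimitiveRoot_eta : IsPrimitiveRoot (eta d) d := by
  simpa [eta] using Complex.isPrimitiveRoot_exp d (NeZero.ne d)

lemma eta_pow_mod (n : ℕ) : eta d ^ (n % d) = eta d ^ n := by
  nth_rw 2 [(isPrimitiveRoot_eta d).eq_orderOf]
  exact pow_mod_orderOf _ n

noncomputable def etaChar (l : Fin d) : AddChar (Fin d) ℂ where
  toFun a := eta d ^ ((a : ℕ) * (l : ℕ))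
  map_zero_eq_one' := by simp
  map_add_eq_mul' a b := by
    rw [← pow_add, ← add_mul, ← eta_pow_mod d (_ * _), Fin.val_add, Nat.mod_mul_mod,
      eta_pow_mod]

lemma etaChar_apply (l a : Fin d) : etaChar d l a = eta d ^ ((a : ℕ) * (l : ℕ)) := rfl

lemma etaChar_comm (l a : Fin d) : etaChar d l a = etaChar d a l := by
  rw [etaChar_apply, etaChar_apply, mul_comm]

lemma etaChar_add (l m a : Fin d) : etaChar d (l + m) a = etaChar d l a * etaChar d m a := by
  rw [etaChar_comm, AddChar.map_add_eq_mul, etaChar_comm, etaChar_comm d m]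

lemma etaChar_neg (l a : Fin d) : etaChar d (-l) a = (starRingEnd ℂ) (etaChar d l a) := by
  rw [etaChar_comm, AddChar.map_neg_eq_conj, etaChar_comm]

lemma etaChar_eq_zero_iff (m : Fin d) : etaChar d m = 0 ↔ m = 0 := by
  refine ⟨fun h => ?_, fun h => by ext a; simp [h, etaChar_apply]⟩
  by_contra hm
  have hm0 : (m : ℕ) ≠ 0 := Fin.val_ne_zero_iff.mpr hm
  have h1 : 1 < d := by omega
  have := AddChar.eq_zero_iff.mp h ⟨1, h1⟩
  rw [etaChar_apply, one_mul] at this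
  exact (isPrimitiveRoot_eta d).pow_ne_one_of_pos_of_lt hm0 m.isLt this

lemma sum_etaChar (m : Fin d) : ∑ a, etaChar d m a = if m = 0 then (d : ℂ) else 0 := by
  simp [AddChar.sum_eq_ite, etaChar_eq_zero_iff]

end RootOfUnity

section Basis

variable (d : ℕ) [NeZero d]

lemma Psi_apply (k l : Fin d) (p : Fin d × Fin d) :
    Psi d k l p = if p.2 = k + p.1 then 1 / (Real.sqrt d : ℂ) * etaChar d l p.1 else 0 := by
  simp only [Psi, Umat, mul_ite, mul_zero, etaChar_apply]

lemma Psi_dotProduct_star (k l k' l' : Fin d) :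
    Psi d k' l' ⬝ᵥ star (Psi d k l) = if (k, l) = (k', l') then 1 else 0 := by
  have hd : (d : ℂ) ≠ 0 := Nat.cast_ne_zero.mpr (NeZero.ne d)
  have hsqrt : (Real.sqrt d : ℂ) * (Real.sqrt d : ℂ) = d := by
    rw [← Complex.ofReal_mul, Real.mul_self_sqrt (Nat.cast_nonneg d), Complex.ofReal_natCast]
  simp only [dotProduct, Pi.star_apply, Fintype.sum_prod_type, Psi_apply, ite_mul, zero_mul,
    Finset.sum_ite_eq', Finset.mem_univ, if_true, add_left_inj]
  by_cases hk : k' = k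
  · subst hk
    have hterm : ∀ a, 1 / (Real.sqrt d : ℂ) * etaChar d l' a *
        star (1 / (Real.sqrt d : ℂ) * etaChar d l a) = (d : ℂ)⁻¹ * etaChar d (l' - l) a := by
      intro a
      rw [sub_eq_add_neg, etaChar_add, etaChar_neg, star_mul', Complex.star_def, map_div₀,
        map_one, Complex.conj_ofReal, ← hsqrt]
      field_simp
    simp only [↓reduceIte]
    rw [Finset.sum_congr rfl fun a _ => hterm a, ← Finset.mul_sum, sum_etaChar]
    by_cases hl : l' = l
    · simp [hl, hd]
    · simp [sub_eq_zero, hl, Ne.symm hl]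
  · simp [hk, Ne.symm hk]

lemma orthonormal_Psi : Orthonormal ℂ fun i : Fin d × Fin d => toLp 2 (Psi d i.1 i.2) := by
  rw [orthonormal_iff_ite]
  intro i j
  rw [EuclideanSpace.inner_toLp_toLp, Psi_dotProduct_star]

noncomputable def psiBasis :
    OrthonormalBasis (Fin d × Fin d) ℂ (EuclideanSpace ℂ (Fin d × Fin d)) :=
  (basisOfOrthonormalOfCardEqFinrank (orthonormal_Psi d) (by simp)).toOrthonormalBasis
    (by rw [coe_basisOfOrthonormalOfCardEqFinrank]; exact orthonormal_Psi d)

lemma psiBasis_apply (i : Fin d × Fin d) : psiBasis d i = toLp 2 (Psi d i.1 i.2) := by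
  simp [psiBasis]

lemma sum_dotProduct_star_smul_Psi (φ : Fin d × Fin d → ℂ) :
    ∑ k, ∑ l, (φ ⬝ᵥ star (Psi d k l)) • Psi d k l = φ := by
  have h := congrArg ofLp ((psiBasis d).sum_repr' (toLp 2 φ))
  simpa [psiBasis_apply, EuclideanSpace.inner_toLp_toLp, Fintype.sum_prod_type] using h

end Basis

section Expectation

variable {ι : Type*} [Fintype ι]

lemma expec_eq_dotProduct (v : ι → ℂ) (ρ : Matrix ι ι ℂ) : expec v ρ = star v ⬝ᵥ ρ *ᵥ v := by
  simp only [expec, dotProduct, mulVec, Finset.mul_sum, Pi.star_apply, Complex.star_def, mul_assoc]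

lemma expec_conjTranspose_mul_mul (v : ι → ℂ) (ρ A : Matrix ι ι ℂ) :
    expec v (Aᴴ * ρ * A) = expec (A *ᵥ v) ρ := by
  rw [expec_eq_dotProduct, expec_eq_dotProduct, ← mulVec_mulVec, ← mulVec_mulVec,
    dotProduct_mulVec, ← star_mulVec]

lemma expec_smul_left (c : ℂ) (v : ι → ℂ) (ρ : Matrix ι ι ℂ) :
    expec (c • v) ρ = (starRingEnd ℂ) c * c * expec v ρ := by
  simp only [expec, Finset.mul_sum, Pi.smul_apply, smul_eq_mul, map_mul]
  exact Finset.sum_congr rfl fun p _ => Finset.sum_congr rfl fun q _ => by ring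

lemma expec_smul (c : ℂ) (v : ι → ℂ) (ρ : Matrix ι ι ℂ) : expec v (c • ρ) = c * expec v ρ := by
  rw [expec_eq_dotProduct, expec_eq_dotProduct, smul_mulVec, dotProduct_smul, smul_eq_mul]

lemma expec_sum {κ : Type*} (s : Finset κ) (v : ι → ℂ) (ρ : κ → Matrix ι ι ℂ) :
    expec v (∑ i ∈ s, ρ i) = ∑ i ∈ s, expec v (ρ i) := by
  simp only [expec_eq_dotProduct, sum_mulVec, dotProduct_sum]

lemma expec_outer (v w : ι → ℂ) : expec v (outer w) = ((‖w ⬝ᵥ star v‖ ^ 2 : ℝ) : ℂ) := by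
  have houter : outer w = vecMulVec w (star w) := rfl
  rw [Complex.ofReal_pow, ← Complex.mul_conj', expec_eq_dotProduct, houter, vecMulVec_mulVec,
    dotProduct_smul, op_smul_eq_mul, dotProduct_comm (star v), dotProduct_comm (star w),
    dotProduct_star, Complex.star_def, Complex.conj_conj]

end Expectation

section Twirl

variable (d : ℕ) [NeZero d]

lemma Gmat_mulVec_apply (k l : Fin d) (v : Fin d × Fin d → ℂ) (p : Fin d × Fin d) :
    (Gmat d k l *ᵥ v) p =
      etaChar d l (p.1 - k) * etaChar d (-l) (p.2 - k) * v (p.1 - k, p.2 - k) := by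
  have hshift : ∀ i r : Fin d, (i = k + r) = (r = i - k) := fun i r =>
    propext (by rw [eq_sub_iff_add_eq', eq_comm])
  simp only [mulVec, dotProduct, Fintype.sum_prod_type, Gmat, Umat, hshift, ite_mul, zero_mul,
    mul_ite, mul_zero, Finset.sum_ite_eq', Finset.mem_univ, if_true, etaChar_apply]

lemma Gmat_mulVec_Psi (k' l' k l : Fin d) :
    Gmat d k' l' *ᵥ Psi d k l = (etaChar d (-l') k * etaChar d l (-k')) • Psi d k l := by
  ext p
  have hcond : (p.2 - k' = k + (p.1 - k')) ↔ p.2 = k + p.1 := by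
    rw [← add_sub_assoc, sub_left_inj]
  rw [Gmat_mulVec_apply, Pi.smul_apply, smul_eq_mul, Psi_apply, Psi_apply]
  simp only [hcond]
  split_ifs with hp
  · have hcancel : etaChar d l' (p.1 - k') * etaChar d (-l') (p.1 - k') = 1 := by
      rw [← etaChar_add, add_neg_cancel, (etaChar_eq_zero_iff d 0).mpr rfl, AddChar.zero_apply]
    have hsplit : etaChar d l (p.1 - k') = etaChar d l p.1 * etaChar d l (-k') := by
      rw [sub_eq_add_neg, AddChar.map_add_eq_mul]
    rw [hp, add_sub_assoc, AddChar.map_add_eq_mul, hsplit]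
    linear_combination (etaChar d (-l') k * (1 / (Real.sqrt d : ℂ)) * etaChar d l p.1 *
      etaChar d l (-k')) * hcancel
  · simp

lemma expec_Psi_conj_Gmat (k' l' k l : Fin d) (ρ : Matrix (Fin d × Fin d) (Fin d × Fin d) ℂ) :
    expec (Psi d k l) ((Gmat d k' l')ᴴ * ρ * Gmat d k' l') = expec (Psi d k l) ρ := by
  rw [expec_conjTranspose_mul_mul, Gmat_mulVec_Psi, expec_smul_left, Complex.conj_mul', norm_mul,
    AddChar.norm_apply, AddChar.norm_apply]
  simp

lemma expec_Psi_twirl (k l : Fin d) (ρ : Matrix (Fin d × Fin d) (Fin d × Fin d) ℂ) :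
    expec (Psi d k l) (twirl d ρ) = expec (Psi d k l) ρ := by
  have hd : (d : ℂ) ≠ 0 := Nat.cast_ne_zero.mpr (NeZero.ne d)
  simp only [twirl, expec_smul, expec_sum, expec_Psi_conj_Gmat, Finset.sum_const,
    Finset.card_univ, Fintype.card_fin, nsmul_eq_mul]
  field_simp

lemma expec_Psi_rhoLam (lam : Fin d → ℝ) (k l : Fin d) :
    expec (Psi d k l) (rhoLam d lam) = if k = 0 then (lam l : ℂ) else 0 := by
  simp only [rhoLam, expec_sum, expec_smul, expec_outer, Psi_dotProduct_star, Prod.mk.injEq]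
  by_cases hk : k = 0 <;> simp [hk, apply_ite (‖·‖), apply_ite ((↑) : ℝ → ℂ)]

end Twirl

theorem twirl_preimage_of_rhoLam_general (d : ℕ) [NeZero d] (lam : Fin d → ℝ)
    (φ : Fin d × Fin d → ℂ)
    (htw : twirl d (outer φ) = rhoLam d lam) :
    ∃ c : Fin d → ℂ, (∀ l, ‖c l‖ ^ 2 = lam l) ∧
      ∀ p, φ p = ∑ l, c l * Psi d 0 l p := by
  have hcoef : ∀ k l, ‖φ ⬝ᵥ star (Psi d k l)‖ ^ 2 = if k = 0 then lam l else 0 := by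
    intro k l
    have h := expec_Psi_twirl d k l (outer φ)
    rw [htw, expec_Psi_rhoLam, expec_outer] at h
    split_ifs at h ⊢ <;> exact_mod_cast h.symm
  refine ⟨fun l => φ ⬝ᵥ star (Psi d 0 l), fun l => by simpa using hcoef 0 l, fun p => ?_⟩
  conv_lhs => rw [← sum_dotProduct_star_smul_Psi d φ]
  rw [Finset.sum_apply, Finset.sum_eq_single 0]
  · simp
  · intro k _ hk
    have h0 : ∀ l, φ ⬝ᵥ star (Psi d k l) = 0 := fun l => by simpa [hk] using hcoef k l
    simp [h0]
  · simp

theorem twirl_preimage_of_rhoLam (d : ℕ) [NeZero d] (lam : Fin d → ℝ)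
    (hpos : ∀ l, 0 ≤ lam l) (hsum : ∑ l, lam l = 1)
    (φ : Fin d × Fin d → ℂ) (hφ : ∑ p, ‖φ p‖ ^ 2 = 1)
    (htw : twirl d (outer φ) = rhoLam d lam) :
    ∃ c : Fin d → ℂ, (∀ l, ‖c l‖ ^ 2 = lam l) ∧
      ∀ p, φ p = ∑ l, c l * Psi d 0 l p :=
  twirl_preimage_of_rhoLam_general d lam φ htw
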